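/- Let Σ = {a,ā,b,b̄,c,c̄}, k ≥ 1, α = a^k, w = αbαᾱαcᾱ, u = b̄ᾱ, v = αᾱb̄ᾱ, and R = w·u⁺·v·ū⁺·w̄·ū⁺·w̄. Then the intersection of R with the iterated (unbounded, two-sided) k-hairpin completion of {w} equals { w·u^r·v·ū^r·w̄·ū^r·w̄ : r ≥ 1 }. -/

import Mathlib

open Computability

/-- Reverse-complement of a word under the involution `bar`. -/
def wbar {S : Type} (bar : S → S) (w : List S) : List S := (w.map bar).reverse

/-- The set of `α`-prefixes of `w` of length at most `ℓ`. -/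
def Pa {S : Type} (α w : List S) (ℓ : ℕ) : Language S :=
  {v | v ++ α <+: w ∧ v.length ≤ ℓ}

/-- `α Σ* ᾱ` : words with prefix `α` and suffix `ᾱ`. -/
def Dom {S : Type} (bar : S → S) (α : List S) : Language S :=
  {z | ∃ β, z = α ++ β ++ wbar bar α}

/-- One-step parameterized hairpin completion with binding word `α`,
left bound `ℓ`, right bound `r`. -/
def HaP {S : Type} (bar : S → S) (α : List S) (ℓ r : ℕ) (L : Language S) : Language S :=
  {z | ∃ γ β, γ.length ≤ ℓ ∧ z = γ ++ α ++ β ++ wbar bar α ++ wbar bar γ ∧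
      α ++ β ++ wbar bar α ++ wbar bar γ ∈ L} ⊔
  {z | ∃ γ β, γ.length ≤ r ∧ z = γ ++ α ++ β ++ wbar bar α ++ wbar bar γ ∧
      γ ++ α ++ β ++ wbar bar α ∈ L}

/-- One-step parameterized hairpin completion `H_k(L,ℓ,r)`. -/
def HkP {S : Type} (bar : S → S) (k ℓ r : ℕ) (L : Language S) : Language S :=
  {z | ∃ α : List S, α.length = k ∧ z ∈ HaP bar α ℓ r L}

def HaIter {S : Type} (bar : S → S) (α : List S) (ℓ r : ℕ) (L : Language S) : ℕ → Language S
  | 0 => L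
  | n + 1 => HaP bar α ℓ r (HaIter bar α ℓ r L n)

/-- Iterated parameterized hairpin completion `H_α*(L,ℓ,r)`. -/
def HaStar {S : Type} (bar : S → S) (α : List S) (ℓ r : ℕ) (L : Language S) : Language S :=
  {z | ∃ n, z ∈ HaIter bar α ℓ r L n}

def HkIter {S : Type} (bar : S → S) (k ℓ r : ℕ) (L : Language S) : ℕ → Language S
  | 0 => L
  | n + 1 => HkP bar k ℓ r (HkIter bar k ℓ r L n)

/-- Iterated parameterized hairpin completion `H_k*(L,ℓ,r)`. -/
def HkStar {S : Type} (bar : S → S) (k ℓ r : ℕ) (L : Language S) : Language S :=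
  {z | ∃ n, z ∈ HkIter bar k ℓ r L n}

/-- Unbounded two-sided hairpin completion `H_k(L)`. -/
def HU {S : Type} (bar : S → S) (k : ℕ) (L : Language S) : Language S :=
  {z | ∃ γ α β, α.length = k ∧ z = γ ++ α ++ β ++ wbar bar α ++ wbar bar γ ∧
      (α ++ β ++ wbar bar α ++ wbar bar γ ∈ L ∨ γ ++ α ++ β ++ wbar bar α ∈ L)}

/-- Unbounded right-sided hairpin completion `RH_k(L)`. -/
def RHU {S : Type} (bar : S → S) (k : ℕ) (L : Language S) : Language S :=
  {z | ∃ γ α β, α.length = k ∧ z = γ ++ α ++ β ++ wbar bar α ++ wbar bar γ ∧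
      γ ++ α ++ β ++ wbar bar α ∈ L}

def HUIter {S : Type} (bar : S → S) (k : ℕ) (L : Language S) : ℕ → Language S
  | 0 => L
  | n + 1 => HU bar k (HUIter bar k L n)

/-- Iterated unbounded two-sided hairpin completion `H_k*(L)`. -/
def HUStar {S : Type} (bar : S → S) (k : ℕ) (L : Language S) : Language S :=
  {z | ∃ n, z ∈ HUIter bar k L n}

def RHUIter {S : Type} (bar : S → S) (k : ℕ) (L : Language S) : ℕ → Language S
  | 0 => L
  | n + 1 => RHU bar k (RHUIter bar k L n)

/-- Iterated unbounded right-sided hairpin completion `RH_k*(L)`. -/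
def RHUStar {S : Type} (bar : S → S) (k : ℕ) (L : Language S) : Language S :=
  {z | ∃ n, z ∈ RHUIter bar k L n}

/-- Image of a language under reverse-complement. -/
def barSet {S : Type} (bar : S → S) (A : Language S) : Language S := wbar bar '' A

/-- The alphabet `Σ = {a, ā, b, b̄, c, c̄}`. -/
inductive HpAb : Type
  | a | abar | b | bbar | c | cbar
deriving DecidableEq

/-- The involution pairing `a ↔ ā`, `b ↔ b̄`, `c ↔ c̄`. -/
def HpAb.inv : HpAb → HpAb
  | .a => .abar
  | .abar => .a
  | .b => .bbar
  | .bbar => .b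
  | .c => .cbar
  | .cbar => .c

/-- The language `L = c · {ā,b̄}* · a^k · ā^k`. -/
def LHp (k : ℕ) : Language HpAb :=
  {z | ∃ v : List HpAb, (∀ x ∈ v, x = HpAb.abar ∨ x = HpAb.bbar) ∧
    z = HpAb.c :: (v ++ List.replicate k HpAb.a ++ List.replicate k HpAb.abar)}

/-- `u^n`: the `n`-fold concatenation of the word `u`. -/
def wpow {S : Type} (u : List S) (n : ℕ) : List S := (List.replicate n u).flatten

/-- `α = a^k`. -/
def alHp (k : ℕ) : List HpAb := List.replicate k HpAb.a

/-- `w = α b α ᾱ α c ᾱ`. -/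
def wHp (k : ℕ) : List HpAb :=
  alHp k ++ [HpAb.b] ++ alHp k ++ wbar HpAb.inv (alHp k) ++ alHp k ++ [HpAb.c]
    ++ wbar HpAb.inv (alHp k)

/-- `u = b̄ ᾱ`. -/
def uHp (k : ℕ) : List HpAb := HpAb.bbar :: wbar HpAb.inv (alHp k)

/-- `v = α ᾱ b̄ ᾱ`. -/
def vHp (k : ℕ) : List HpAb :=
  alHp k ++ wbar HpAb.inv (alHp k) ++ [HpAb.bbar] ++ wbar HpAb.inv (alHp k)


/-!
Every word of `H_k^*({w})` begins with `a^k b` or `a^k c̄` and ends with `b̄ ā^k` or `c ā^k`. Hence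
every completion step binds `α = a^k`, and up to reverse-complement it is a right step
`x ↦ x γ̄` in which `x` ends with `b̄ ā^k` or `c ā^k` and `γ a^k` is a prefix of `x`.

The words `w u^r v ū^s w̄` and `w u^r v ū^s w̄ ū^t w̄` expand token words under `a ↦ a^k`,
`ā ↦ ā^k`, and the end of `x` sits at a token boundary (a cut). Going through the few possible
cuts: a right step can produce `w u^r v ū^s w̄ ū^t w̄` non-trivially only from `w u^r v ū^s w̄`
with `t = r`, it can produce `w u^r v ū^s w̄` non-trivially only if `s = r`, and it cannot
produce the reverse-complements of these words non-trivially at all. In each case the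
comparison of `Ȳ a` with the prefix `w u^r ⋯` is what fails or forces equality of exponents.
Conversely, `w u^r v ū^r w̄ ū^r w̄` is reached from `w` by `r + 3` right steps.
-/
open List

section Words

variable {S : Type} (bar : S → S)

@[simp] theorem wbar_nil : wbar bar [] = [] := rfl

@[simp] theorem wbar_append (u v : List S) : wbar bar (u ++ v) = wbar bar v ++ wbar bar u := by
  simp [wbar]

@[simp] theorem wbar_cons (x : S) (u : List S) : wbar bar (x :: u) = wbar bar u ++ [bar x] := by
  simp [wbar]

@[simp] theorem wbar_replicate (n : ℕ) (x : S) :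
    wbar bar (replicate n x) = replicate n (bar x) := by
  simp [wbar]

variable {bar}

@[simp] theorem wbar_wbar (hbar : Function.Involutive bar) (u : List S) :
    wbar bar (wbar bar u) = u := by
  simp [wbar, map_reverse, hbar.comp_self]

@[simp] theorem wpow_zero (u : List S) : wpow u 0 = [] := rfl

theorem wpow_succ (u : List S) (n : ℕ) : wpow u (n + 1) = u ++ wpow u n := by
  simp [wpow, replicate_succ]

theorem wpow_succ' (u : List S) (n : ℕ) : wpow u (n + 1) = wpow u n ++ u := by
  simp [wpow, replicate_succ']

theorem wpow_append_rotate (u v : List S) (n : ℕ) :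
    u ++ wpow (v ++ u) n = wpow (u ++ v) n ++ u := by
  induction n with
  | zero => simp [wpow]
  | succ n ih => rw [wpow_succ', wpow_succ', ← append_assoc, ih]; simp

theorem wbar_wpow (u : List S) (n : ℕ) : wbar bar (wpow u n) = wpow (wbar bar u) n := by
  induction n with
  | zero => rfl
  | succ n ih => rw [wpow_succ, wbar_append, ih, ← wpow_succ']

theorem mem_of_mem_wpow {u : List S} {n : ℕ} {x : S} (h : x ∈ wpow u n) : x ∈ u := by
  simp only [wpow, mem_flatten, mem_replicate] at h
  obtain ⟨_, ⟨_, rfl⟩, hx⟩ := h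
  exact hx

end Words

def wordRS {S : Type} (bar : S → S) (w u v : List S) (r s : ℕ) : List S :=
  w ++ wpow u r ++ v ++ wpow (wbar bar u) s ++ wbar bar w

def wordRST {S : Type} (bar : S → S) (w u v : List S) (r s t : ℕ) : List S :=
  wordRS bar w u v r s ++ wpow (wbar bar u) t ++ wbar bar w

section Completion

variable {S : Type} {bar : S → S} {k : ℕ}

def IsRightExt (bar : S → S) (k : ℕ) (x z : List S) : Prop :=
  ∃ γ α β, α.length = k ∧ x = γ ++ α ++ β ++ wbar bar α ∧ z = x ++ wbar bar γ

theorem IsRightExt.mem_HU {L : Language S} {x z : List S} (h : IsRightExt bar k x z)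
    (hx : x ∈ L) : z ∈ HU bar k L := by
  obtain ⟨γ, α, β, hα, rfl, rfl⟩ := h
  exact ⟨γ, α, β, hα, rfl, Or.inr hx⟩

/-- A left completion step is the reverse-complement of a right one. -/
theorem exists_isRightExt_of_mem_HU (hbar : Function.Involutive bar) {L : Language S}
    {z : List S} (hz : z ∈ HU bar k L) :
    ∃ x, (x ∈ L ∧ IsRightExt bar k x z) ∨ (wbar bar x ∈ L ∧ IsRightExt bar k x (wbar bar z)) := by
  obtain ⟨γ, α, β, hα, rfl, hL | hL⟩ := hz
  · refine ⟨γ ++ α ++ wbar bar β ++ wbar bar α, Or.inr ⟨?_, γ, α, wbar bar β, hα, rfl, ?_⟩⟩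
    · simpa [hbar, append_assoc] using hL
    · simp [hbar, append_assoc]
  · exact ⟨_, Or.inl ⟨hL, γ, α, β, hα, rfl, rfl⟩⟩

end Completion

namespace HpAb

theorem inv_involutive : Function.Involutive inv := fun x => by cases x <;> rfl

def StartsFramed (k : ℕ) (x : List HpAb) : Prop :=
  ∃ d, (d = b ∨ d = cbar) ∧ replicate k a ++ [d] <+: x

/-- The second conjunct says that `x` ends with `b̄ ā^k` or `c ā^k`. -/
def Framed (k : ℕ) (x : List HpAb) : Prop :=
  StartsFramed k x ∧ StartsFramed k (wbar inv x)

variable {k : ℕ}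

theorem framed_wbar {x : List HpAb} (h : Framed k x) : Framed k (wbar inv x) :=
  ⟨h.2, by simpa [inv_involutive] using h.1⟩

theorem framed_wHp : Framed k (wHp k) := by
  constructor
  · exact ⟨b, Or.inl rfl, by simp [wHp, alHp, append_assoc]⟩
  · exact ⟨cbar, Or.inr rfl, by simp [wHp, alHp, inv, append_assoc]⟩

theorem StartsFramed.append {x : List HpAb} (h : StartsFramed k x) (y : List HpAb) :
    StartsFramed k (x ++ y) :=
  let ⟨d, hd, hp⟩ := h; ⟨d, hd, hp.trans (prefix_append _ _)⟩

/-- A nonempty `γ` with `γ a^k` a prefix of `x` cannot consist of `a`'s only, so it is long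
enough to contain the frame `a^k d` of `x`. -/
theorem StartsFramed.append_of_prefix {x γ : List HpAb} (h : StartsFramed k x)
    (hγ : γ ++ replicate k a <+: x) (hne : γ ≠ []) (y : List HpAb) :
    StartsFramed k (γ ++ y) := by
  obtain ⟨d, hd, hp⟩ := h
  have hγx : γ <+: x := (prefix_append _ _).trans hγ
  by_cases hlen : k + 1 ≤ γ.length
  · exact ⟨d, hd, (prefix_of_prefix_length_le hp hγx (by simpa using hlen)).trans
      (prefix_append _ _)⟩
  · exfalso
    have hγa : γ <+: replicate k a :=
      prefix_of_prefix_length_le hγx ((prefix_append _ _).trans hp)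
        (by rw [length_replicate]; omega)
    have hda : d ∈ γ ++ replicate k a :=
      (prefix_of_prefix_length_le hp hγ (by simp [length_pos_iff.mpr hne])).subset (by simp)
    have : d = a := by
      rcases mem_append.mp hda with h | h
      · exact eq_of_mem_replicate (hγa.subset h)
      · exact eq_of_mem_replicate h
    rcases hd with rfl | rfl <;> cases this

theorem Framed.eq_replicate {γ α β : List HpAb} (h : Framed k (γ ++ α ++ β ++ wbar inv α))
    (hα : α.length = k) : α = replicate k a := by
  obtain ⟨d, -, hp⟩ := h.2
  have hwx : α <+: wbar inv (γ ++ α ++ β ++ wbar inv α) := by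
    simp [inv_involutive, append_assoc]
  exact (prefix_of_prefix_length_le hwx ((prefix_append _ _).trans hp) (by simp [hα])).eq_of_length
    (by simp [hα])

theorem Framed.of_isRightExt {x z : List HpAb} (h : Framed k x) (hext : IsRightExt inv k x z) :
    Framed k z := by
  obtain ⟨γ, α, β, hα, rfl, rfl⟩ := hext
  obtain rfl := h.eq_replicate hα
  refine ⟨h.1.append _, ?_⟩
  rcases eq_or_ne γ [] with rfl | hne
  · simpa using h.2
  · rw [wbar_append, wbar_wbar inv_involutive]
    exact h.1.append_of_prefix (by simp [append_assoc]) hne _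

theorem framed_of_mem_HUIter : ∀ (n : ℕ) {x : List HpAb},
    x ∈ HUIter inv k {wHp k} n → Framed k x
  | 0, _, rfl => framed_wHp
  | n + 1, z, hz => by
    obtain ⟨x, ⟨hx, hext⟩ | ⟨hx, hext⟩⟩ := exists_isRightExt_of_mem_HU inv_involutive hz
    · exact (framed_of_mem_HUIter n hx).of_isRightExt hext
    · have hxf : Framed k x := by
        simpa [inv_involutive] using framed_wbar (framed_of_mem_HUIter n hx)
      simpa [inv_involutive] using framed_wbar (hxf.of_isRightExt hext)

theorem Framed.exists_eq_append {x : List HpAb} (h : Framed k x) :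
    ∃ y d, (d = bbar ∨ d = c) ∧ x = y ++ d :: replicate k abar := by
  obtain ⟨d, hd, R, hR⟩ := h.2
  refine ⟨wbar inv R, inv d, by rcases hd with rfl | rfl <;> simp [inv], ?_⟩
  have := congrArg (wbar inv) hR
  simp only [wbar_wbar inv_involutive] at this
  simp [← this, inv]

def block (k : ℕ) : HpAb → List HpAb
  | a => replicate k a
  | abar => replicate k abar
  | x => [x]

def expand (k : ℕ) (L : List HpAb) : List HpAb := L.flatMap (block k)

@[simp] theorem expand_nil : expand k [] = [] := rfl

@[simp] theorem expand_cons (t : HpAb) (L : List HpAb) :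
    expand k (t :: L) = block k t ++ expand k L := rfl

@[simp] theorem expand_append (L M : List HpAb) : expand k (L ++ M) = expand k L ++ expand k M :=
  flatMap_append

theorem expand_wbar (L : List HpAb) : expand k (wbar inv L) = wbar inv (expand k L) := by
  induction L with
  | nil => rfl
  | cons t L ih => cases t <;> simp [ih, block, inv]

theorem expand_wpow (L : List HpAb) (n : ℕ) : expand k (wpow L n) = wpow (expand k L) n := by
  induction n with
  | zero => rfl
  | succ n ih => rw [wpow_succ, wpow_succ, expand_append, ih]

theorem block_eq_cons (hk : 1 ≤ k) (t : HpAb) : ∃ r, block k t = t :: r := by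
  obtain ⟨k, rfl⟩ := Nat.exists_eq_add_of_le' hk
  cases t <;> simp [block, replicate_succ]

theorem prefix_of_expand_prefix (hk : 1 ≤ k) :
    ∀ {M L : List HpAb}, expand k M <+: expand k L → M <+: L
  | [], L, _ => nil_prefix
  | t :: M, [], h => by
    obtain ⟨r, hr⟩ := block_eq_cons hk t
    simp [hr] at h
  | t :: M, s :: L, h => by
    obtain ⟨rt, hrt⟩ := block_eq_cons hk t
    obtain ⟨rs, hrs⟩ := block_eq_cons hk s
    obtain rfl : t = s := by
      have h' := h
      simp only [expand_cons, hrt, hrs, cons_append, cons_prefix_cons] at h'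
      exact h'.1
    simp only [expand_cons, prefix_append_right_inj] at h
    exact cons_prefix_cons.mpr ⟨rfl, prefix_of_expand_prefix hk h⟩

theorem expand_injective (hk : 1 ≤ k) : Function.Injective (expand k) := fun _ _ h =>
  (prefix_of_expand_prefix hk (h ▸ prefix_refl _)).eq_of_length
    ((prefix_of_expand_prefix hk (h ▸ prefix_refl _)).length_le.antisymm
      (prefix_of_expand_prefix hk (h.symm ▸ prefix_refl _)).length_le)

theorem exists_eq_cons_of_expand_eq (hk : 1 ≤ k) {t : HpAb} {L s : List HpAb}
    (h : expand k L = block k t ++ s) : ∃ L', L = t :: L' ∧ expand k L' = s := by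
  obtain ⟨r, hr⟩ := block_eq_cons hk t
  match L with
  | [] => simp [hr] at h
  | t' :: L' =>
    obtain ⟨r', hr'⟩ := block_eq_cons hk t'
    obtain rfl : t' = t := by
      have h' := h
      rw [expand_cons, hr, hr'] at h'
      exact (cons_eq_cons.mp h').1
    exact ⟨L', rfl, append_cancel_left h⟩

theorem exists_eq_of_expand_eq (hk : 1 ≤ k) {d : HpAb} (hd : d = bbar ∨ d = c) :
    ∀ {L y s : List HpAb}, expand k L = y ++ d :: (replicate k abar ++ s) →
      ∃ L₁ L₂, L = L₁ ++ d :: abar :: L₂ ∧ expand k L₁ = y ∧ expand k L₂ = s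
  | L, [], s, h => by
    have hbd : block k d = [d] := by rcases hd with rfl | rfl <;> rfl
    obtain ⟨L', rfl, hL'⟩ := exists_eq_cons_of_expand_eq hk (t := d) (by simpa [hbd] using h)
    obtain ⟨L₂, rfl, hL₂⟩ := exists_eq_cons_of_expand_eq hk (t := abar) hL'
    exact ⟨[], L₂, rfl, rfl, hL₂⟩
  | [], e :: y, s, h => by simp at h
  | t :: L, e :: y, s, h => by
    rw [expand_cons] at h
    obtain ⟨y', hy, h'⟩ : ∃ y', e :: y = block k t ++ y' ∧
        expand k L = y' ++ d :: (replicate k abar ++ s) := by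
      rcases append_eq_append_iff.mp h with ⟨y', hy, h'⟩ | ⟨_ | ⟨x, c'⟩, hc', h'⟩
      · exact ⟨y', hy, h'⟩
      · exact ⟨[], by simpa using hc'.symm, by simpa using h'.symm⟩
      · -- `block k t` would contain both `e` and `d`, but only single-letter blocks contain `d`
        obtain ⟨rfl, -⟩ := cons_eq_cons.mp h'
        have hdt : d ∈ block k t := by simp [hc']
        rcases hd with rfl | rfl <;> cases t <;> simp [block] at hdt hc'
    obtain ⟨L₁, L₂, rfl, rfl, hL₂⟩ := exists_eq_of_expand_eq hk hd h'
    exact ⟨t :: L₁, L₂, rfl, hy.symm, hL₂⟩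

def EndsCut (X : List HpAb) : Prop := [bbar, abar] <:+ X ∨ [c, abar] <:+ X

instance : DecidablePred EndsCut := fun _ => inferInstanceAs (Decidable (_ ∨ _))

/-- A right completion step `X ↦ Z = X Y` on token words, with `γ = Ȳ` and `α = a`; the cut at the
end of `X` is where `ᾱ = ā^k` ends. -/
def IsRightPred (X Z : List HpAb) : Prop :=
  ∃ Y, Z = X ++ Y ∧ EndsCut X ∧ wbar inv Y ++ [a] <+: X

theorem exists_isRightPred_of_isRightExt (hk : 1 ≤ k) {x Z : List HpAb}
    (hx : Framed k x) (hext : IsRightExt inv k x (expand k Z)) :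
    ∃ X, IsRightPred X Z ∧ expand k X = x := by
  obtain ⟨γ, α, β, hα, rfl, hZ⟩ := hext
  obtain rfl := hx.eq_replicate hα
  obtain ⟨y, d, hd, hy⟩ := hx.exists_eq_append
  rw [hy, append_assoc, cons_append] at hZ
  obtain ⟨L₁, L₂, rfl, rfl, hL₂⟩ := exists_eq_of_expand_eq hk hd hZ
  have hbd : block k d = [d] := by rcases hd with rfl | rfl <;> rfl
  have hX : expand k (L₁ ++ [d, abar]) = expand k L₁ ++ d :: replicate k abar := by
    rw [expand_append, expand_cons, hbd]
    simp [block]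
  refine ⟨L₁ ++ [d, abar], ⟨L₂, by simp, ?_, ?_⟩, by rw [hX, hy]⟩
  · rcases hd with rfl | rfl
    exacts [Or.inl (suffix_append _ _), Or.inr (suffix_append _ _)]
  · apply prefix_of_expand_prefix hk
    rw [hX, ← hy, expand_append, expand_wbar, hL₂, wbar_wbar inv_involutive]
    simp [block, append_assoc]

theorem exists_isRightPred_of_mem (hk : 1 ≤ k) {n : ℕ} {Z : List HpAb}
    (hZ : expand k Z ∈ HUIter inv k {wHp k} (n + 1)) :
    ∃ X, (IsRightPred X Z ∧ expand k X ∈ HUIter inv k {wHp k} n) ∨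
      (IsRightPred X (wbar inv Z) ∧ expand k (wbar inv X) ∈ HUIter inv k {wHp k} n) := by
  obtain ⟨x, ⟨hx, hext⟩ | ⟨hx, hext⟩⟩ := exists_isRightExt_of_mem_HU inv_involutive hZ
  · obtain ⟨X, hX, rfl⟩ :=
      exists_isRightPred_of_isRightExt hk (framed_of_mem_HUIter n hx) hext
    exact ⟨X, Or.inl ⟨hX, hx⟩⟩
  · have hxf : Framed k x := by
      simpa [inv_involutive] using framed_wbar (framed_of_mem_HUIter n hx)
    rw [← expand_wbar] at hext
    obtain ⟨X, hX, rfl⟩ := exists_isRightPred_of_isRightExt hk hxf hext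
    exact ⟨X, Or.inr ⟨hX, by rwa [expand_wbar]⟩⟩

theorem EndsCut.getLast? {X : List HpAb} (h : EndsCut X) : X.getLast? = some abar := by
  rcases h with ⟨t, rfl⟩ | ⟨t, rfl⟩ <;> simp

theorem EndsCut.mem {X : List HpAb} (h : EndsCut X) : bbar ∈ X ∨ c ∈ X := by
  rcases h with h | h
  exacts [Or.inl (h.subset (by simp)), Or.inr (h.subset (by simp))]

/-- The hypothesis on `B` excludes a cut `d ā` straddling `A` and `B`. -/
theorem EndsCut.split {X Y A B : List HpAb} (hX : EndsCut X) (h : X ++ Y = A ++ B)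
    (hB : B.head? ≠ some abar) :
    (∃ A', A = X ++ A' ∧ Y = A' ++ B) ∨ ∃ X', X = A ++ X' ∧ X' ++ Y = B ∧ EndsCut X' := by
  rcases append_eq_append_iff.mp h with hA | ⟨_ | ⟨x, _ | ⟨x', X'⟩⟩, rfl, hB'⟩
  · exact Or.inl hA
  · exact Or.inl ⟨[], by simp, by simpa using hB'.symm⟩
  · have := hX.getLast?
    simp only [getLast?_concat, Option.some.injEq] at this
    subst this
    simp [hB'] at hB
  · refine Or.inr ⟨_, rfl, hB'.symm, ?_⟩
    exact hX.imp (fun hs => suffix_of_suffix_length_le hs (suffix_append _ _) (by simp))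
      (fun hs => suffix_of_suffix_length_le hs (suffix_append _ _) (by simp))

def NoInnerCut (A : List HpAb) : Prop := ∀ X, X <+: A → EndsCut X → X = A

theorem noInnerCut_of_take {A : List HpAb} (h : ∀ n < A.length, ¬ EndsCut (A.take n)) :
    NoInnerCut A := by
  intro X hX hc
  have hlen := hX.length_le
  rw [prefix_iff_eq_take] at hX
  by_contra hne
  exact h _ (lt_of_le_of_ne hlen fun hl => hne (by rw [hX, hl, take_length])) (hX ▸ hc)

theorem NoInnerCut.append {A B : List HpAb} (hA : ∀ x ∈ A, x ≠ bbar ∧ x ≠ c)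
    (hB : NoInnerCut B) (hBh : B.head? ≠ some abar) : NoInnerCut (A ++ B) := by
  rintro X ⟨Y, hXY⟩ hX
  rcases hX.split hXY hBh with ⟨A', rfl, -⟩ | ⟨X', rfl, hX'Y, hX'⟩
  · rcases hX.mem with h | h
    · exact absurd rfl (hA _ (mem_append_left _ h)).1
    · exact absurd rfl (hA _ (mem_append_left _ h)).2
  · rw [hB X' ⟨Y, hX'Y⟩ hX']

theorem EndsCut.split_of_noInnerCut {X Y A B : List HpAb} (hA : NoInnerCut A) (hX : EndsCut X)
    (h : X ++ Y = A ++ B) (hB : B.head? ≠ some abar) :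
    (X = A ∧ Y = B) ∨ ∃ X', X = A ++ X' ∧ X' ++ Y = B ∧ EndsCut X' := by
  rcases hX.split h hB with ⟨A', rfl, rfl⟩ | h'
  · obtain rfl : A' = [] := by simpa using (hA X (prefix_append _ _) hX).symm
    simp
  · exact Or.inr h'

theorem EndsCut.eq_of_noInnerCut {X Y A : List HpAb} (hA : NoInnerCut A) (hX : EndsCut X)
    (h : X ++ Y = A) : X = A ∧ Y = [] := by
  obtain rfl := hA X ⟨Y, h⟩ hX
  simpa using h

def wTok : List HpAb := [a, b, a, abar, a, c, abar]

def uTok : List HpAb := [bbar, abar]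

def vTok : List HpAb := [a, abar, bbar, abar]

theorem expand_wTok : expand k wTok = wHp k := by
  simp [wTok, wHp, alHp, block, inv, append_assoc]

theorem expand_wordRST (r s t : ℕ) :
    expand k (wordRST inv wTok uTok vTok r s t) = wordRST inv (wHp k) (uHp k) (vHp k) r s t := by
  have hu : expand k uTok = uHp k := by simp [uTok, uHp, alHp, block, inv]
  have hv : expand k vTok = vHp k := by simp [vTok, vHp, alHp, block, inv, append_assoc]
  simp only [wordRST, wordRS, expand_append, expand_wpow, expand_wbar, expand_wTok, hu, hv]

theorem eq_of_wpow_uTok_prefix {P Q : List HpAb} (hP : P.head? = some a)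
    (hQ : Q.head? ≠ some bbar) :
    ∀ {m n : ℕ}, wpow uTok m ++ P <+: wpow uTok n ++ Q → m = n ∧ P <+: Q
  | 0, 0, h => ⟨rfl, by simpa using h⟩
  | 0, n + 1, h => by
    obtain ⟨P, rfl⟩ := head?_eq_some_iff.mp hP
    simp [wpow_succ, uTok] at h
  | m + 1, 0, h => by
    obtain ⟨R, rfl⟩ := h
    simp [wpow_succ, uTok] at hQ
  | m + 1, n + 1, h => by
    simp only [wpow_succ, append_assoc, prefix_append_right_inj] at h
    exact (eq_of_wpow_uTok_prefix hP hQ h).imp_left (congrArg (· + 1))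

theorem noInnerCut_vTok : NoInnerCut vTok := noInnerCut_of_take (by decide)

theorem noInnerCut_wpow_append (s : ℕ) : NoInnerCut (wpow (wbar inv uTok) s ++ wbar inv wTok) :=
  NoInnerCut.append
    (fun x hx => (by decide : ∀ x ∈ wbar inv uTok, x ≠ bbar ∧ x ≠ c) x (mem_of_mem_wpow hx))
    (noInnerCut_of_take (by decide)) (by decide)

theorem noInnerCut_wbar_vTok_append (r : ℕ) :
    NoInnerCut (wbar inv vTok ++ (wpow (wbar inv uTok) r ++ wbar inv wTok)) :=
  NoInnerCut.append (by decide) (noInnerCut_wpow_append r)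
    (by cases r <;> simp [wpow_succ, uTok, wTok, inv])

/-- A cut inside the leading `w u^n` is impossible: there `Ȳ a` would have to be a prefix of
`w u^n`, while `Ȳ` begins with `w u^m a`. -/
theorem IsRightPred.exists_of_eq_append {X B : List HpAb} {n m : ℕ}
    (h : IsRightPred X (wTok ++ wpow uTok n ++ B)) (hB : B.head? = some a)
    (hBbar : wTok ++ wpow uTok m ++ [a] <+: wbar inv B) :
    ∃ X' Y, X = wTok ++ wpow uTok n ++ X' ∧ X' ++ Y = B ∧ EndsCut X' ∧
      wbar inv Y ++ [a] <+: X := by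
  obtain ⟨Y, hZ, hX, hpre⟩ := h
  rcases hX.split hZ.symm (by simp [hB]) with ⟨A', hA', rfl⟩ | ⟨X', rfl, hXY, hX'⟩
  · have : wTok ++ wpow uTok m ++ [a] <+: wTok ++ wpow uTok n ++ [] := by
      rw [append_nil, hA']
      refine (hBbar.trans ?_).trans (hpre.trans (prefix_append _ _))
      simp [append_assoc]
    rw [append_assoc, append_assoc, prefix_append_right_inj] at this
    simpa using (eq_of_wpow_uTok_prefix rfl (by simp) this).2
  · exact ⟨X', Y, rfl, hXY, hX', hpre⟩

variable {r s t : ℕ}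

theorem IsRightPred.eq_wordRS {X : List HpAb} (h : IsRightPred X (wordRS inv wTok uTok vTok r s)) :
    X = wordRS inv wTok uTok vTok r s ∨ s = r := by
  have hZ : wordRS inv wTok uTok vTok r s =
      wTok ++ wpow uTok r ++ (vTok ++ (wpow (wbar inv uTok) s ++ wbar inv wTok)) := by
    simp [wordRS, append_assoc]
  rw [hZ] at h ⊢
  obtain ⟨X', Y, rfl, hXY, hX', hpre⟩ := h.exists_of_eq_append (m := s) rfl
    (by simp [wbar_wpow, inv_involutive, vTok, inv])
  rcases hX'.split_of_noInnerCut noInnerCut_vTok hXY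
    (by cases s <;> simp [wpow_succ, uTok, wTok, inv]) with ⟨rfl, rfl⟩ | ⟨X'', rfl, hXY', hX''⟩
  · right
    have : wpow uTok s ++ [a] <+: wpow uTok r ++ vTok := by
      simpa [wbar_wpow, inv_involutive, append_assoc] using hpre
    exact (eq_of_wpow_uTok_prefix rfl (by simp [vTok]) this).1
  · obtain ⟨rfl, rfl⟩ := hX''.eq_of_noInnerCut (noInnerCut_wpow_append s) hXY'
    simp

theorem IsRightPred.eq_wordRST {X : List HpAb}
    (h : IsRightPred X (wordRST inv wTok uTok vTok r s t)) :
    X = wordRST inv wTok uTok vTok r s t ∨ (t = r ∧ X = wordRS inv wTok uTok vTok r s) := by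
  have hZ : wordRST inv wTok uTok vTok r s t = wTok ++ wpow uTok r ++
      (vTok ++ ((wpow (wbar inv uTok) s ++ wbar inv wTok) ++
        (wpow (wbar inv uTok) t ++ wbar inv wTok))) := by
    simp [wordRST, wordRS, append_assoc]
  rw [hZ] at h ⊢
  obtain ⟨X', Y, rfl, hXY, hX', hpre⟩ := h.exists_of_eq_append (m := t) rfl
    (by simp [wbar_wpow, inv_involutive, wTok, inv])
  rcases hX'.split_of_noInnerCut noInnerCut_vTok hXY
    (by cases s <;> simp [wpow_succ, uTok, wTok, inv]) with ⟨rfl, rfl⟩ | ⟨X'', rfl, hXY', hX''⟩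
  · exfalso
    have : wpow uTok t ++ (wTok ++ wpow uTok s ++ [a]) <+: wpow uTok r ++ vTok := by
      simpa [wbar_wpow, inv_involutive, append_assoc] using hpre
    simpa [wTok, vTok] using (eq_of_wpow_uTok_prefix rfl (by simp [vTok]) this).2
  rcases hX''.split_of_noInnerCut (noInnerCut_wpow_append s) hXY'
    (by cases t <;> simp [wpow_succ, uTok, wTok, inv]) with ⟨rfl, rfl⟩ | ⟨X''', rfl, hXY'', hX'''⟩
  · right
    have : wpow uTok t ++ [a] <+:
        wpow uTok r ++ (vTok ++ (wpow (wbar inv uTok) s ++ wbar inv wTok)) := by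
      simpa [wbar_wpow, inv_involutive, append_assoc] using hpre
    exact ⟨(eq_of_wpow_uTok_prefix rfl (by simp [vTok]) this).1, by simp [wordRS, append_assoc]⟩
  · obtain ⟨rfl, rfl⟩ := hX'''.eq_of_noInnerCut (noInnerCut_wpow_append t) hXY''
    simp

theorem IsRightPred.eq_wbar_wordRS {X : List HpAb}
    (h : IsRightPred X (wbar inv (wordRS inv wTok uTok vTok r s))) :
    X = wbar inv (wordRS inv wTok uTok vTok r s) := by
  have hZ : wbar inv (wordRS inv wTok uTok vTok r s) = wTok ++ wpow uTok s ++
      (wbar inv vTok ++ (wpow (wbar inv uTok) r ++ wbar inv wTok)) := by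
    simp [wordRS, wbar_wpow, inv_involutive, append_assoc]
  rw [hZ] at h ⊢
  obtain ⟨X', Y, rfl, hXY, hX', -⟩ := h.exists_of_eq_append (m := r) rfl
    (by simp [wbar_wpow, inv_involutive, vTok, inv])
  obtain ⟨rfl, rfl⟩ := hX'.eq_of_noInnerCut (noInnerCut_wbar_vTok_append r) hXY
  rfl

theorem IsRightPred.eq_wbar_wordRST {X : List HpAb}
    (h : IsRightPred X (wbar inv (wordRST inv wTok uTok vTok r s t))) :
    X = wbar inv (wordRST inv wTok uTok vTok r s t) := by
  have hZ : wbar inv (wordRST inv wTok uTok vTok r s t) = wTok ++ wpow uTok t ++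
      ((wTok ++ wpow uTok s) ++
        (wbar inv vTok ++ (wpow (wbar inv uTok) r ++ wbar inv wTok))) := by
    simp [wordRST, wordRS, wbar_wpow, inv_involutive, append_assoc]
  rw [hZ] at h ⊢
  obtain ⟨X', Y, rfl, hXY, hX', hpre⟩ := h.exists_of_eq_append (m := r) rfl
    (by simp [wbar_wpow, inv_involutive, vTok, inv, wTok])
  rcases hX'.split hXY (by simp [inv, vTok]) with ⟨A', hA', rfl⟩ | ⟨X'', rfl, hXY', hX''⟩
  · exfalso
    have : wpow uTok r ++ (vTok ++ wbar inv A' ++ [a]) <+: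
        wpow uTok t ++ (wTok ++ wpow uTok s) := by
      simpa [wbar_wpow, inv_involutive, append_assoc] using
        hpre.trans ((prefix_append_right_inj (wTok ++ wpow uTok t)).mpr ⟨A', hA'.symm⟩)
    simpa [vTok, wTok] using (eq_of_wpow_uTok_prefix rfl (by simp [wTok]) this).2
  · obtain ⟨rfl, rfl⟩ := hX''.eq_of_noInnerCut (noInnerCut_wbar_vTok_append r) hXY'
    simp

theorem eq_of_expand_wordRS_mem (hk : 1 ≤ k) : ∀ (n : ℕ) {r s : ℕ},
    expand k (wordRS inv wTok uTok vTok r s) ∈ HUIter inv k {wHp k} n → s = r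
  | 0, r, s, h => by
    have := expand_injective hk (h.trans expand_wTok.symm)
    simp [wordRS, wTok, vTok] at this
  | n + 1, r, s, h => by
    obtain ⟨X, ⟨hX, hmem⟩ | ⟨hX, hmem⟩⟩ := exists_isRightPred_of_mem hk h
    · rcases hX.eq_wordRS with rfl | hsr
      exacts [eq_of_expand_wordRS_mem hk n hmem, hsr]
    · rw [hX.eq_wbar_wordRS, wbar_wbar inv_involutive] at hmem
      exact eq_of_expand_wordRS_mem hk n hmem

theorem eq_of_expand_wordRST_mem (hk : 1 ≤ k) : ∀ (n : ℕ) {r s t : ℕ},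
    expand k (wordRST inv wTok uTok vTok r s t) ∈ HUIter inv k {wHp k} n → s = r ∧ t = r
  | 0, r, s, t, h => by
    have := expand_injective hk (h.trans expand_wTok.symm)
    simp [wordRST, wordRS, wTok, vTok] at this
  | n + 1, r, s, t, h => by
    obtain ⟨X, ⟨hX, hmem⟩ | ⟨hX, hmem⟩⟩ := exists_isRightPred_of_mem hk h
    · rcases hX.eq_wordRST with rfl | ⟨htr, rfl⟩
      exacts [eq_of_expand_wordRST_mem hk n hmem, ⟨eq_of_expand_wordRS_mem hk n hmem, htr⟩]
    · rw [hX.eq_wbar_wordRST, wbar_wbar inv_involutive] at hmem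
      exact eq_of_expand_wordRST_mem hk n hmem

theorem expand_append_wbar_mem {L : Language HpAb} {n : ℕ} {Z : List HpAb} (P M : List HpAb)
    (hZ : Z = P ++ a :: M ++ [abar]) (h : expand k Z ∈ HUIter inv k L n) :
    expand k (Z ++ wbar inv P) ∈ HUIter inv k L (n + 1) := by
  subst hZ
  refine IsRightExt.mem_HU ⟨expand k P, replicate k a, expand k M, by simp, ?_, ?_⟩ h
  · simp [block, inv, append_assoc]
  · rw [expand_append, expand_wbar]

theorem wTok_append_wpow (r : ℕ) :
    wTok ++ wpow uTok r = [a, b, a, abar, a, c] ++ wpow [abar, bbar] r ++ [abar] := by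
  have := wpow_append_rotate [abar] [bbar] r
  simp_all [wTok, uTok]

theorem expand_wTok_append_wpow_mem :
    ∀ r, expand k (wTok ++ wpow uTok r) ∈ HUIter inv k {wHp k} r
  | 0 => by rw [wpow_zero, append_nil, expand_wTok]; exact Set.mem_singleton _
  | r + 1 => by
    have h := expand_append_wbar_mem [a, b] ([abar, a, c] ++ wpow [abar, bbar] r)
      (by simp [wTok_append_wpow]) (expand_wTok_append_wpow_mem r)
    rwa [wpow_succ', ← append_assoc]

theorem expand_wordRST_mem (r : ℕ) :
    expand k (wordRST inv wTok uTok vTok r r r) ∈ HUIter inv k {wHp k} (r + 3) := by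
  have h₁ := expand_append_wbar_mem [a, b, a, abar] ([c] ++ wpow [abar, bbar] r)
    (by simp [wTok_append_wpow]) (expand_wTok_append_wpow_mem (k := k) r)
  have h₂ := expand_append_wbar_mem (wTok ++ wpow uTok r) [abar, bbar] (by simp [inv]) h₁
  have h₃ := expand_append_wbar_mem (wTok ++ wpow uTok r)
    ([abar, bbar, abar] ++ wpow (wbar inv uTok) r ++ [a, cbar, abar, a, abar, bbar])
    (by simp [wbar_wpow, inv, wTok, uTok, append_assoc]) h₂
  convert h₃ using 2
  simp [wordRST, wordRS, wbar_wpow, vTok, inv, append_assoc]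

end HpAb

/-- With `R = w·u⁺·v·ū⁺·w̄·ū⁺·w̄`, the intersection of `R` with the iterated
unbounded two-sided `k`-hairpin completion of `{w}` is
`{ w u^r v ū^r w̄ ū^r w̄ : r ≥ 1 }`. -/
theorem inter_HUStar_eq (k : ℕ) (hk : 1 ≤ k) :
    ({z | ∃ r s t : ℕ, 1 ≤ r ∧ 1 ≤ s ∧ 1 ≤ t ∧
        z = wHp k ++ wpow (uHp k) r ++ vHp k ++ wpow (wbar HpAb.inv (uHp k)) s
          ++ wbar HpAb.inv (wHp k) ++ wpow (wbar HpAb.inv (uHp k)) t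
          ++ wbar HpAb.inv (wHp k)} : Language HpAb)
      ⊓ HUStar HpAb.inv k ({wHp k} : Language HpAb) =
    {z | ∃ r : ℕ, 1 ≤ r ∧
        z = wHp k ++ wpow (uHp k) r ++ vHp k ++ wpow (wbar HpAb.inv (uHp k)) r
          ++ wbar HpAb.inv (wHp k) ++ wpow (wbar HpAb.inv (uHp k)) r
          ++ wbar HpAb.inv (wHp k)} := by
  ext z
  constructor
  · rintro ⟨⟨r, s, t, hr, -, -, rfl⟩, n, hn⟩
    obtain ⟨rfl, rfl⟩ := HpAb.eq_of_expand_wordRST_mem hk n (by rwa [HpAb.expand_wordRST])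
    exact ⟨_, hr, rfl⟩
  · rintro ⟨r, hr, rfl⟩
    refine ⟨⟨r, r, r, hr, hr, hr, rfl⟩, r + 3, ?_⟩
    have := HpAb.expand_wordRST_mem (k := k) r
    rwa [HpAb.expand_wordRST] at this
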